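/- arXiv:2601.21496 — 7 statements merged into one kernel-verified Lean document; each statement's English description precedes it below -/
import Mathlib

section
/- Let a : ℕ → ℝ and b : ℕ → ℝ be nonnegative sequences supported on {0,...,n} and {0,...,m} respectively, each log-concave with no internal zeros. Then their convolution c, defined by c_t = Σ_{i+j=t} a_i b_j, is log-concave: c_t^2 ≥ c_{t-1} c_{t+1} for all 1 ≤ t ≤ m+n-1. -/
/-!
Extended by zero to `ℤ`, a nonnegative log-concave sequence without internal zeros satisfies
`A p * A (q + 1) ≤ A (p + 1) * A q` for all `p ≤ q`: on its support, an interval, the ratios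
`A (k + 1) / A k` decrease, by chaining the log-concavity inequalities. For two such sequences,
`c t ^ 2 - c (t - 1) * c (t + 1) = ∑ i, ∑ j, g i j * h i j` with `g i j = A i * A (j - 1)` and
`h i j = B (t - i) * B (t + 1 - j) - B (t + 1 - i) * B (t - j)`. Since `h` is antisymmetric, the
double sum is half of `∑ i, ∑ j, (g i j - g j i) * h i j`, and both factors there have the sign
of `j - i`.
-/
open Finset

/-- The cross-multiplied form of "`A (k + 1) / A k` is antitone"; for nonnegative `A` this is the
Pólya frequency condition of order two. -/
def IsPF2 (A : ℤ → ℝ) : Prop :=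
  ∀ p q, p ≤ q → A p * A (q + 1) ≤ A (p + 1) * A q

theorem sum_sum_mul_nonneg_of_antisymm {ι : Type*} [LinearOrder ι] (s : Finset ι)
    (g h : ι → ι → ℝ) (h_antisymm : ∀ i j, h j i = -h i j)
    (hle : ∀ i j, i ≤ j → 0 ≤ (g i j - g j i) * h i j) :
    0 ≤ ∑ i ∈ s, ∑ j ∈ s, g i j * h i j := by
  have hsymm : ∀ i j, 0 ≤ (g i j - g j i) * h i j := fun i j => by
    rcases le_total i j with hij | hji
    · exact hle i j hij
    · have := hle j i hji
      rw [h_antisymm] at this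
      linarith
  have hswap : ∑ i ∈ s, ∑ j ∈ s, g j i * h i j = -∑ i ∈ s, ∑ j ∈ s, g i j * h i j := by
    rw [sum_comm, ← sum_neg_distrib]
    refine sum_congr rfl fun i _ => ?_
    rw [← sum_neg_distrib]
    exact sum_congr rfl fun j _ => by rw [h_antisymm, mul_neg]
  have hsum : 0 ≤ ∑ i ∈ s, ∑ j ∈ s, (g i j - g j i) * h i j :=
    sum_nonneg fun i _ => sum_nonneg fun j _ => hsymm i j
  simp only [sub_mul, sum_sub_distrib, hswap] at hsum
  linarith

theorem IsPF2.sum_mul_sum_shift_le {A B : ℤ → ℝ} (hA : IsPF2 A) (hB : IsPF2 B)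
    (s : Finset ℤ) (t : ℤ) :
    (∑ i ∈ s, A i * B (t + 1 - i)) * ∑ j ∈ s, A (j - 1) * B (t - j) ≤
      (∑ i ∈ s, A i * B (t - i)) * ∑ j ∈ s, A (j - 1) * B (t + 1 - j) := by
  have expand : ∀ i j, A i * B (t - i) * (A (j - 1) * B (t + 1 - j)) -
      A i * B (t + 1 - i) * (A (j - 1) * B (t - j)) =
      A i * A (j - 1) * (B (t - i) * B (t + 1 - j) - B (t + 1 - i) * B (t - j)) := by
    intros; ring
  rw [← sub_nonneg, sum_mul_sum, sum_mul_sum, ← sum_sub_distrib]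
  simp only [← sum_sub_distrib, expand]
  refine sum_sum_mul_nonneg_of_antisymm s _ _ (fun i j => by ring) fun i j hij => mul_nonneg ?_ ?_
  · have := hA (i - 1) (j - 1) (by omega)
    simp only [sub_add_cancel] at this
    linarith
  · have := hB (t - j) (t - i) (by omega)
    rw [sub_add_eq_add_sub, sub_add_eq_add_sub] at this
    linarith

noncomputable def zeroExt (a : ℕ → ℝ) : ℤ → ℝ := fun k => if 0 ≤ k then a k.toNat else 0

@[simp]
theorem zeroExt_natCast (a : ℕ → ℝ) (k : ℕ) : zeroExt a k = a k := by
  simp [zeroExt]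

theorem zeroExt_of_neg (a : ℕ → ℝ) {k : ℤ} (hk : k < 0) : zeroExt a k = 0 := by
  simp [zeroExt, not_le.mpr hk]

theorem zeroExt_nonneg {a : ℕ → ℝ} (ha : ∀ i, 0 ≤ a i) (k : ℤ) : 0 ≤ zeroExt a k := by
  unfold zeroExt
  split_ifs
  exacts [ha _, le_rfl]

theorem isPF2_zeroExt {a : ℕ → ℝ} (ha : ∀ i, 0 ≤ a i)
    (h : ∀ p q : ℕ, p ≤ q → a p ≠ 0 → a (q + 1) ≠ 0 → a p * a (q + 1) ≤ a (p + 1) * a q) :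
    IsPF2 (zeroExt a) := by
  intro p q hpq
  have hnonneg := zeroExt_nonneg ha
  by_cases hp : zeroExt a p = 0
  · rw [hp, zero_mul]; exact mul_nonneg (hnonneg _) (hnonneg _)
  by_cases hq : zeroExt a (q + 1) = 0
  · rw [hq, mul_zero]; exact mul_nonneg (hnonneg _) (hnonneg _)
  lift p to ℕ using not_lt.1 fun hneg => hp (zeroExt_of_neg a hneg)
  lift q to ℕ using by omega
  simp only [← Nat.cast_succ, zeroExt_natCast] at hp hq ⊢
  exact h p q (by exact_mod_cast hpq) hp hq

theorem sum_range_zeroExt_mul (a b : ℕ → ℝ) {u N : ℕ} (h : u < N) :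
    ∑ i ∈ range N, zeroExt a i * zeroExt b (u - i) = ∑ i ∈ range (u + 1), a i * b (u - i) := by
  rw [← sum_subset (range_subset_range.2 h) fun i _ hi => ?_]
  · refine sum_congr rfl fun i hi => ?_
    rw [← Nat.cast_sub (by simpa [Nat.lt_succ_iff] using hi), zeroExt_natCast, zeroExt_natCast]
  · rw [zeroExt_of_neg b (by simp at hi; omega), mul_zero]

theorem sum_range_succ_zeroExt_sub_one_mul (a : ℕ → ℝ) (B : ℤ → ℝ) (u : ℤ) (N : ℕ) :
    ∑ j ∈ range (N + 1), zeroExt a (j - 1) * B (u + 1 - j) =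
      ∑ i ∈ range N, zeroExt a i * B (u - i) := by
  rw [sum_range_succ', Nat.cast_zero, zeroExt_of_neg a (by norm_num), zero_mul, add_zero]
  refine sum_congr rfl fun i _ => ?_
  rw [Nat.cast_succ, add_sub_cancel_right, add_sub_add_right_eq_sub]

theorem mul_succ_le_succ_mul_of_logConcave {a : ℕ → ℝ} (ha : ∀ k, 0 ≤ a k) {p q : ℕ}
    (hpq : p ≤ q) (hpos : ∀ k, p ≤ k → k ≤ q → 0 < a k)
    (hlc : ∀ k, p ≤ k → k < q → a k * a (k + 2) ≤ a (k + 1) ^ 2) :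
    a p * a (q + 1) ≤ a (p + 1) * a q := by
  induction q, hpq using Nat.le_induction with
  | base => exact (mul_comm _ _).le
  | succ q hpq ih =>
    have ih := ih (fun k h1 h2 => hpos k h1 (by omega)) (fun k h1 h2 => hlc k h1 (by omega))
    refine le_of_mul_le_mul_left ?_ (hpos q hpq (by omega))
    calc a q * (a p * a (q + 1 + 1)) = a p * (a q * a (q + 2)) := by ring
      _ ≤ a p * a (q + 1) ^ 2 := mul_le_mul_of_nonneg_left (hlc q hpq (by omega)) (ha p)
      _ = a (q + 1) * (a p * a (q + 1)) := by ring
      _ ≤ a (q + 1) * (a (p + 1) * a q) := mul_le_mul_of_nonneg_left ih (ha _)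
      _ = a q * (a (p + 1) * a (q + 1)) := by ring

theorem isPF2_zeroExt_of_logConcave {n : ℕ} {a : ℕ → ℝ} (ha : ∀ i, 0 ≤ a i)
    (hsupp : ∀ i, n < i → a i = 0)
    (hlc : ∀ k, 1 ≤ k → k ≤ n - 1 → a k ^ 2 ≥ a (k - 1) * a (k + 1))
    (hniz : ¬ ∃ p q r, p < q ∧ q < r ∧ r ≤ n ∧ a p ≠ 0 ∧ a q = 0 ∧ a r ≠ 0) :
    IsPF2 (zeroExt a) := by
  refine isPF2_zeroExt ha fun p q hpq hp hq => ?_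
  have hqn : q + 1 ≤ n := by
    by_contra h
    exact hq (hsupp _ (by omega))
  refine mul_succ_le_succ_mul_of_logConcave ha hpq (fun k hpk hkq => ?_) fun k hpk hkq => ?_
  · rcases hpk.eq_or_lt with rfl | hpk
    · exact (ha _).lt_of_ne' hp
    · exact (ha k).lt_of_ne' fun hk => hniz ⟨p, k, q + 1, hpk, by omega, hqn, hp, hk, hq⟩
  · simpa using hlc (k + 1) (by omega) (by omega)

theorem convolution_log_concave (n m : ℕ) (a b : ℕ → ℝ)
    (ha0 : ∀ i, 0 ≤ a i) (hb0 : ∀ i, 0 ≤ b i)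
    (hasupp : ∀ i, n < i → a i = 0) (hbsupp : ∀ i, m < i → b i = 0)
    (halc : ∀ k, 1 ≤ k → k ≤ n - 1 → a k ^ 2 ≥ a (k - 1) * a (k + 1))
    (hblc : ∀ k, 1 ≤ k → k ≤ m - 1 → b k ^ 2 ≥ b (k - 1) * b (k + 1))
    (haniz : ¬ ∃ p q r, p < q ∧ q < r ∧ r ≤ n ∧ a p ≠ 0 ∧ a q = 0 ∧ a r ≠ 0)
    (hbniz : ¬ ∃ p q r, p < q ∧ q < r ∧ r ≤ m ∧ b p ≠ 0 ∧ b q = 0 ∧ b r ≠ 0) :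
    ∀ t, 1 ≤ t → t ≤ m + n - 1 →
      (∑ i ∈ Finset.range (t + 1), a i * b (t - i)) ^ 2 ≥
        (∑ i ∈ Finset.range t, a i * b (t - 1 - i)) *
        (∑ i ∈ Finset.range (t + 2), a i * b (t + 1 - i)) := by
  intro t ht _
  obtain ⟨s, rfl⟩ : ∃ s, t = s + 1 := ⟨t - 1, by omega⟩
  have key := (isPF2_zeroExt_of_logConcave ha0 hasupp halc haniz).sum_mul_sum_shift_le
    (isPF2_zeroExt_of_logConcave hb0 hbsupp hblc hbniz)
    ((range (s + 3)).map Nat.castEmbedding) (s + 1)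
  simp only [sum_map, Nat.castEmbedding_apply] at key
  rw [sum_range_succ_zeroExt_sub_one_mul, sum_range_succ_zeroExt_sub_one_mul] at key
  simp only [← Nat.cast_succ] at key
  rw [sum_range_zeroExt_mul a b (by omega), sum_range_zeroExt_mul a b (by omega),
    sum_range_zeroExt_mul a b (by omega), sum_range_zeroExt_mul a b (by omega)] at key
  -- `key` now reads `c (s + 2) * c s ≤ c (s + 1) * c (s + 1)`
  rw [ge_iff_le, sq, Nat.add_sub_cancel, mul_comm]
  exact key
end

section
/- Let a : ℕ → ℝ and b : ℕ → ℝ be nonnegative sequences supported on {0,...,n} and {0,...,m} respectively, each log-concave with no internal zeros. Then their convolution c_t = Σ_{i+j=t} a_i b_j is unimodal. -/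
/-!
Extend `a` and `b` by zero to `ℤ`. For a nonnegative log-concave sequence without internal zeros
the ratios `f (k + 1) / f k` decrease along the support, which gives
`f (i - 1) * f (j + 1) ≤ f i * f j` for all `i ≤ j`. Expanding products of convolution sums,
`2 (c_s² - c_{s-1} c_{s+1})` equals
`∑_{i,j} (a_i a_j - a_{i-1} a_{j+1}) (b_{s-i} b_{s-j} - b_{s+1-i} b_{s-1-j})`,
and each summand is nonnegative since both factors are `≥ 0` when `i ≤ j` and `≤ 0` when
`i ≥ j + 2`. The support of `c` is the sum of two integer intervals, hence an interval, so `c` is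
again log-concave without internal zeros. Such a sequence never increases after a strict descent,
so its first strict descent is a mode.
-/

open Finset Function
open scoped Pointwise

theorem Set.OrdConnected.add {α : Type*} [AddCommGroup α] [LinearOrder α] [IsOrderedAddMonoid α]
    {s t : Set α} (hs : s.OrdConnected) (ht : t.OrdConnected) : (s + t).OrdConnected := by
  refine ⟨?_⟩
  rintro _ ⟨a, ha, b, hb, rfl⟩ _ ⟨a', ha', b', hb', rfl⟩ z ⟨hz, hz'⟩
  rcases le_total (z - b) a' with h | h
  · exact ⟨z - b, hs.out ha ha' ⟨le_sub_iff_add_le.2 hz, h⟩, b, hb, sub_add_cancel z b⟩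
  · refine ⟨a', ha', z - a', ht.out hb hb' ⟨?_, sub_le_iff_le_add'.2 hz'⟩, add_sub_cancel a' z⟩
    exact le_sub_iff_add_le'.2 (le_sub_iff_add_le.1 h)

theorem exists_mode_of_descent_persists {α : Type*} [LinearOrder α] (c : ℕ → α) (N : ℕ)
    (h : ∀ i, c (i + 1) < c i → ∀ t, i ≤ t → c (t + 1) ≤ c t) :
    ∃ k, k ≤ N ∧ (∀ i, i < k → c i ≤ c (i + 1)) ∧ ∀ i, k ≤ i → i < N → c (i + 1) ≤ c i := by
  classical
  by_cases hdrop : ∃ i, i < N ∧ c (i + 1) < c i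
  · obtain ⟨hkN, hk⟩ := Nat.find_spec hdrop
    refine ⟨Nat.find hdrop, hkN.le, fun i hi => ?_, fun i hki _ => h _ hk i hki⟩
    exact not_lt.1 fun hlt => Nat.find_min hdrop hi ⟨hi.trans hkN, hlt⟩
  · push Not at hdrop
    exact ⟨N, le_rfl, hdrop, fun i hNi hiN => absurd hiN (not_lt.2 hNi)⟩

noncomputable def discreteConv (f g : ℤ → ℝ) (s : ℤ) : ℝ := ∑ᶠ i, f i * g (s - i)

section discreteConv

variable {f g : ℤ → ℝ}

theorem discreteConv_add_eq_sum {J : Finset ℤ} (d : ℤ) (hJ : ∀ i, f (i + d) ≠ 0 → i ∈ J)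
    (s : ℤ) :
    discreteConv f g (s + d) = ∑ i ∈ J, f (i + d) * g (s - i) := by
  rw [discreteConv, ← finsum_comp_equiv (Equiv.addRight d)]
  simp only [Equiv.coe_addRight, add_sub_add_right_eq_sub]
  exact finsum_eq_sum_of_support_subset _ fun i hi => hJ i (left_ne_zero_of_mul hi)

theorem support_discreteConv (hf0 : ∀ i, 0 ≤ f i) (hg0 : ∀ i, 0 ≤ g i)
    (hf : (support f).Finite) : support (discreteConv f g) = support f + support g := by
  ext s
  have hsum := discreteConv_add_eq_sum (g := g) 0 (J := hf.toFinset)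
    (fun i hi => hf.mem_toFinset.2 (by simpa using hi)) s
  simp only [add_zero] at hsum
  rw [mem_support, hsum, Ne,
    Finset.sum_eq_zero_iff_of_nonneg fun i _ => mul_nonneg (hf0 i) (hg0 _), Set.mem_add]
  push Not
  constructor
  · rintro ⟨i, -, hi⟩
    exact ⟨i, left_ne_zero_of_mul hi, s - i, right_ne_zero_of_mul hi, add_sub_cancel i s⟩
  · rintro ⟨i, hi, j, hj, rfl⟩
    exact ⟨i, hf.mem_toFinset.2 hi, by simpa using mul_ne_zero hi hj⟩

theorem discreteConv_nonneg (hf0 : ∀ i, 0 ≤ f i) (hg0 : ∀ i, 0 ≤ g i) (s : ℤ) :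
    0 ≤ discreteConv f g s :=
  finsum_nonneg fun i => mul_nonneg (hf0 i) (hg0 _)

theorem minor_mul_minor_nonneg
    (hf : ∀ i j, i ≤ j → f (i - 1) * f (j + 1) ≤ f i * f j)
    (hg : ∀ i j, i ≤ j → g (i - 1) * g (j + 1) ≤ g i * g j) (s i j : ℤ) :
    0 ≤ (f i * f j - f (i - 1) * f (j + 1)) *
      (g (s - i) * g (s - j) - g (s + 1 - i) * g (s - 1 - j)) := by
  rcases le_or_gt i j with hij | hji
  · have hg' := hg (s - j) (s - i) (by omega)
    rw [show s - j - 1 = s - 1 - j by ring, show s - i + 1 = s + 1 - i by ring] at hg'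
    exact mul_nonneg (sub_nonneg.2 (hf i j hij)) (by linarith)
  rcases (Int.add_one_le_iff.2 hji).eq_or_lt with rfl | hji
  · simp [mul_comm]
  · have hf' := hf (j + 1) (i - 1) (by omega)
    have hg' := hg (s + 1 - i) (s - 1 - j) (by omega)
    rw [add_sub_cancel_right, sub_add_cancel] at hf'
    rw [show s + 1 - i - 1 = s - i by ring, show s - 1 - j + 1 = s - j by ring] at hg'
    exact mul_nonneg_of_nonpos_of_nonpos (by linarith) (by linarith)

theorem discreteConv_logConcave (hfin : (support f).Finite)
    (hf : ∀ i j, i ≤ j → f (i - 1) * f (j + 1) ≤ f i * f j)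
    (hg : ∀ i j, i ≤ j → g (i - 1) * g (j + 1) ≤ g i * g j) (s : ℤ) :
    discreteConv f g (s - 1) * discreteConv f g (s + 1) ≤ discreteConv f g s ^ 2 := by
  obtain ⟨L, hL⟩ := hfin.bddBelow
  obtain ⟨U, hU⟩ := hfin.bddAbove
  set C := discreteConv f g
  set J := Finset.Icc (L - 1) (U + 1)
  have hJ : ∀ d : ℤ, |d| ≤ 1 → ∀ i, f (i + d) ≠ 0 → i ∈ J := fun d hd i hi => by
    have := hL hi; have := hU hi; have := abs_le.1 hd
    simp only [J, Finset.mem_Icc]; omega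
  have hsum (d : ℤ) (hd : |d| ≤ 1) (t : ℤ) := discreteConv_add_eq_sum (g := g) d (hJ d hd) t
  have E₁ : C s = ∑ i ∈ J, f i * g (s - i) := by simpa using hsum 0 (by simp) s
  have E₂ : C (s + 1) = ∑ i ∈ J, f i * g (s + 1 - i) := by
    simpa using hsum 0 (by simp) (s + 1)
  have E₃ : C (s - 1) = ∑ i ∈ J, f i * g (s - 1 - i) := by
    simpa using hsum 0 (by simp) (s - 1)
  have E₄ : C (s - 1) = ∑ i ∈ J, f (i - 1) * g (s - i) := by
    simpa only [← sub_eq_add_neg] using hsum (-1) (by simp) s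
  have E₅ : C (s + 1) = ∑ i ∈ J, f (i + 1) * g (s - i) := hsum 1 (by simp) s
  have E₆ : C s = ∑ i ∈ J, f (i - 1) * g (s + 1 - i) := by
    simpa only [← sub_eq_add_neg, add_sub_cancel_right] using hsum (-1) (by simp) (s + 1)
  have E₇ : C s = ∑ i ∈ J, f (i + 1) * g (s - 1 - i) := by
    simpa only [sub_add_cancel] using hsum 1 (by simp) (s - 1)
  have key : (∑ i ∈ J, f i * g (s - i)) * (∑ j ∈ J, f j * g (s - j))
      - (∑ i ∈ J, f i * g (s + 1 - i)) * (∑ j ∈ J, f j * g (s - 1 - j))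
      - (∑ i ∈ J, f (i - 1) * g (s - i)) * (∑ j ∈ J, f (j + 1) * g (s - j))
      + (∑ i ∈ J, f (i - 1) * g (s + 1 - i)) * (∑ j ∈ J, f (j + 1) * g (s - 1 - j)) =
      ∑ i ∈ J, ∑ j ∈ J, (f i * f j - f (i - 1) * f (j + 1)) *
        (g (s - i) * g (s - j) - g (s + 1 - i) * g (s - 1 - j)) := by
    simp only [Finset.sum_mul_sum, ← Finset.sum_sub_distrib, ← Finset.sum_add_distrib]
    exact Finset.sum_congr rfl fun i _ => Finset.sum_congr rfl fun j _ => by ring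
  rw [← E₁, ← E₂, ← E₃, ← E₄, ← E₅, ← E₆, ← E₇] at key
  linarith [key, Finset.sum_nonneg fun i (_ : i ∈ J) => Finset.sum_nonneg fun j (_ : j ∈ J) =>
    minor_mul_minor_nonneg hf hg s i j]

end discreteConv

/-- Having no internal zeros is expressed as order-connectedness of the support. -/
structure IsLogConcaveSeq (f : ℤ → ℝ) : Prop where
  nonneg : ∀ k, 0 ≤ f k
  finite_support : (support f).Finite
  ordConnected_support : (support f).OrdConnected
  logConcave : ∀ k, f (k - 1) * f (k + 1) ≤ f k ^ 2

namespace IsLogConcaveSeq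

variable {f g : ℤ → ℝ}

theorem pos_of_le_of_le (hf : IsLogConcaveSeq f) {p q r : ℤ} (hp : 0 < f p) (hr : 0 < f r)
    (hpq : p ≤ q) (hqr : q ≤ r) : 0 < f q :=
  (hf.nonneg q).lt_of_ne' (hf.ordConnected_support.out hp.ne' hr.ne' ⟨hpq, hqr⟩)

theorem mul_le_mul_of_le (hf : IsLogConcaveSeq f) {i j : ℤ} (hij : i ≤ j) :
    f (i - 1) * f (j + 1) ≤ f i * f j := by
  obtain ⟨d, rfl⟩ := Int.exists_add_of_le hij
  clear hij
  induction d generalizing i with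
  | zero => simpa [sq] using hf.logConcave i
  | succ d ih =>
    push_cast
    rcases (hf.nonneg (i - 1)).eq_or_lt with h | hlo
    · rw [← h, zero_mul]; exact mul_nonneg (hf.nonneg _) (hf.nonneg _)
    rcases (hf.nonneg (i + (d + 1) + 1)).eq_or_lt with h | hhi
    · rw [← h, mul_zero]; exact mul_nonneg (hf.nonneg _) (hf.nonneg _)
    have hi := hf.pos_of_le_of_le hlo hhi (q := i) (by omega) (by omega)
    have hi' := hf.pos_of_le_of_le hlo hhi (p := i - 1) (q := i + 1) (by omega) (by omega)
    have h₁ := hf.logConcave i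
    have h₂ := ih (i := i + 1)
    rw [add_sub_cancel_right, show i + 1 + d = i + (d + 1) by ring] at h₂
    -- multiply `h₁` and `h₂`, then cancel `f i * f (i + 1) > 0`
    refine le_of_mul_le_mul_right ?_ (mul_pos hi hi')
    nlinarith [mul_le_mul h₁ h₂ (mul_nonneg (hf.nonneg _) (hf.nonneg _)) (sq_nonneg _)]

theorem discreteConv (hf : IsLogConcaveSeq f) (hg : IsLogConcaveSeq g) :
    IsLogConcaveSeq (discreteConv f g) where
  nonneg := discreteConv_nonneg hf.nonneg hg.nonneg
  finite_support := by
    rw [support_discreteConv hf.nonneg hg.nonneg hf.finite_support]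
    exact hf.finite_support.add hg.finite_support
  ordConnected_support := by
    rw [support_discreteConv hf.nonneg hg.nonneg hf.finite_support]
    exact hf.ordConnected_support.add hg.ordConnected_support
  logConcave := discreteConv_logConcave hf.finite_support (fun _ _ => hf.mul_le_mul_of_le)
    (fun _ _ => hg.mul_le_mul_of_le)

theorem apply_succ_le_of_apply_succ_lt (hf : IsLogConcaveSeq f) {i : ℤ} (hi : f (i + 1) < f i)
    {t : ℤ} (ht : i ≤ t) : f (t + 1) ≤ f t := by
  induction t, ht using Int.leInduction with
  | base => exact hi.le
  | succ t hit ih =>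
    rcases (hf.nonneg (t + 1)).eq_or_lt with h | hpos
    · rw [← h]
      by_contra! hnext
      have := hf.pos_of_le_of_le ((hf.nonneg _).trans_lt hi) hnext (q := t + 1) (by omega)
        (by omega)
      exact this.ne' h.symm
    · have hlc := hf.logConcave (t + 1)
      rw [add_sub_cancel_right] at hlc
      nlinarith [hpos.trans_le ih]

end IsLogConcaveSeq

theorem ordConnected_support_of_noInternalZeros {M : Type*} [Zero M] {n : ℕ} {a : ℕ → M}
    (hsupp : ∀ i, n < i → a i = 0)
    (hniz : ¬ ∃ p q r, p < q ∧ q < r ∧ r ≤ n ∧ a p ≠ 0 ∧ a q = 0 ∧ a r ≠ 0) :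
    (support a).OrdConnected := by
  refine ⟨fun p hp r hr q hq => ?_⟩
  rcases hq.1.eq_or_lt with rfl | hpq
  · exact hp
  rcases hq.2.eq_or_lt with rfl | hqr
  · exact hr
  exact fun hq0 => hniz ⟨p, q, r, hpq, hqr, not_lt.1 fun h => hr (hsupp r h), hp, hq0, hr⟩

theorem mul_le_sq_of_logConcave_interior {n : ℕ} {a : ℕ → ℝ} (hsupp : ∀ i, n < i → a i = 0)
    (hlc : ∀ k, 1 ≤ k → k ≤ n - 1 → a k ^ 2 ≥ a (k - 1) * a (k + 1)) (j : ℕ) :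
    a j * a (j + 2) ≤ a (j + 1) ^ 2 := by
  by_cases hj : j + 1 ≤ n - 1
  · simpa using hlc (j + 1) (by omega) hj
  · rw [hsupp (j + 2) (by omega), mul_zero]
    positivity

theorem Set.OrdConnected.image_natCast {s : Set ℕ} (hs : s.OrdConnected) :
    (((↑) : ℕ → ℤ) '' s).OrdConnected := by
  refine ⟨?_⟩
  rintro _ ⟨p, hp, rfl⟩ _ ⟨r, hr, rfl⟩ z ⟨hpz, hzr⟩
  lift z to ℕ using (Nat.cast_nonneg p).trans hpz
  exact ⟨z, hs.out hp hr ⟨by exact_mod_cast hpz, by exact_mod_cast hzr⟩, rfl⟩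

theorem extend_natCast_of_neg {M : Type*} [Zero M] (a : ℕ → M) {z : ℤ} (hz : z < 0) :
    extend ((↑) : ℕ → ℤ) a 0 z = 0 :=
  extend_apply' _ _ _ (by rintro ⟨p, rfl⟩; omega)

section extend

variable {a b : ℕ → ℝ}

theorem isLogConcaveSeq_extend_natCast (h0 : ∀ i, 0 ≤ a i) (hfin : (support a).Finite)
    (hconn : (support a).OrdConnected) (hlc : ∀ j, a j * a (j + 2) ≤ a (j + 1) ^ 2) :
    IsLogConcaveSeq (extend ((↑) : ℕ → ℤ) a 0) where
  nonneg z := by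
    rcases lt_or_ge z 0 with hz | hz
    · exact (extend_natCast_of_neg a hz).ge
    · lift z to ℕ using hz
      rw [Nat.cast_injective.extend_apply]
      exact h0 z
  finite_support := by
    rw [support_extend_zero Nat.cast_injective]
    exact hfin.image _
  ordConnected_support := by
    rw [support_extend_zero Nat.cast_injective]
    exact hconn.image_natCast
  logConcave k := by
    rcases lt_or_ge (k - 1) 0 with hk | hk
    · rw [extend_natCast_of_neg a hk, zero_mul]
      positivity
    · obtain ⟨j, rfl⟩ : ∃ j : ℕ, k = j + 1 := ⟨(k - 1).toNat, by omega⟩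
      rw [add_sub_cancel_right, show (j : ℤ) + 1 + 1 = (j + 2 : ℕ) by push_cast; ring,
        ← Nat.cast_succ]
      simpa only [Nat.cast_injective.extend_apply] using hlc j

theorem discreteConv_extend_natCast (t : ℕ) :
    discreteConv (extend ((↑) : ℕ → ℤ) a 0) (extend ((↑) : ℕ → ℤ) b 0) t =
      ∑ p ∈ range (t + 1), a p * b (t - p) := by
  rw [discreteConv, finsum_eq_sum_of_support_subset _ (s := (range (t + 1)).map Nat.castEmbedding),
    Finset.sum_map]
  · refine Finset.sum_congr rfl fun p hp => ?_
    rw [Nat.castEmbedding_apply, ← Nat.cast_sub (by simpa [Nat.lt_succ_iff] using hp),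
      Nat.cast_injective.extend_apply, Nat.cast_injective.extend_apply]
  · intro i hi
    obtain ⟨p, -, rfl⟩ := (support_extend_zero Nat.cast_injective).le (left_ne_zero_of_mul hi)
    obtain ⟨q, -, hq⟩ := (support_extend_zero Nat.cast_injective).le (right_ne_zero_of_mul hi)
    simp only [Finset.coe_map, Set.mem_image, Finset.mem_coe, Finset.mem_range]
    exact ⟨p, by omega, rfl⟩

end extend

theorem convolution_unimodal (n m : ℕ) (a b : ℕ → ℝ)
    (ha0 : ∀ i, 0 ≤ a i) (hb0 : ∀ i, 0 ≤ b i)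
    (hasupp : ∀ i, n < i → a i = 0) (hbsupp : ∀ i, m < i → b i = 0)
    (halc : ∀ k, 1 ≤ k → k ≤ n - 1 → a k ^ 2 ≥ a (k - 1) * a (k + 1))
    (hblc : ∀ k, 1 ≤ k → k ≤ m - 1 → b k ^ 2 ≥ b (k - 1) * b (k + 1))
    (haniz : ¬ ∃ p q r, p < q ∧ q < r ∧ r ≤ n ∧ a p ≠ 0 ∧ a q = 0 ∧ a r ≠ 0)
    (hbniz : ¬ ∃ p q r, p < q ∧ q < r ∧ r ≤ m ∧ b p ≠ 0 ∧ b q = 0 ∧ b r ≠ 0) :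
    ∃ k, k ≤ m + n ∧
      (∀ i, i < k → (∑ p ∈ Finset.range (i + 1), a p * b (i - p)) ≤
          ∑ p ∈ Finset.range (i + 2), a p * b (i + 1 - p)) ∧
      (∀ i, k ≤ i → i < m + n → (∑ p ∈ Finset.range (i + 2), a p * b (i + 1 - p)) ≤
          ∑ p ∈ Finset.range (i + 1), a p * b (i - p)) := by
  have hA := isLogConcaveSeq_extend_natCast ha0
    ((Set.finite_Iic n).subset fun i hi => not_lt.1 fun h => hi (hasupp i h))
    (ordConnected_support_of_noInternalZeros hasupp haniz)
    (mul_le_sq_of_logConcave_interior hasupp halc)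
  have hB := isLogConcaveSeq_extend_natCast hb0
    ((Set.finite_Iic m).subset fun i hi => not_lt.1 fun h => hi (hbsupp i h))
    (ordConnected_support_of_noInternalZeros hbsupp hbniz)
    (mul_le_sq_of_logConcave_interior hbsupp hblc)
  have hC := hA.discreteConv hB
  exact exists_mode_of_descent_persists (fun t => ∑ p ∈ range (t + 1), a p * b (t - p)) (m + n)
    fun i hi t ht => by
      simp only [← discreteConv_extend_natCast, Nat.cast_add, Nat.cast_one] at hi ⊢
      exact hC.apply_succ_le_of_apply_succ_lt hi (by exact_mod_cast ht)
end

section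
/- Let f(x) = Σ_{k=0}^n a_k x^k be a real polynomial with nonnegative coefficients all of whose roots are real. Then the coefficient sequence is log-concave: a_k^2 ≥ a_{k-1} a_{k+1} for all 1 ≤ k ≤ n-1. -/
/-!
Since every complex root of `f` is real, `f = c ∏ (X - aᵢ)` over `ℝ`, and nonnegative
coefficients force `aᵢ ≤ 0` (such an `f` is positive on `(0, ∞)`). Multiplying by `X + r` with
`r ≥ 0` does not always preserve log-concavity of the coefficients, but it does preserve the
stronger property that the ratios of consecutive coefficients decrease; building `f` up one linear
factor at a time gives that property for its coefficients, and log-concavity is a special case.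
-/

open Polynomial

/-- The cross-multiplied form of "`i ↦ u (i + 1) / u i` is antitone", which still makes sense when
terms vanish. For nonnegative `u` it means log-concavity without internal zeros. -/
def RatioAntitone {R : Type*} [Mul R] [LE R] (u : ℕ → R) : Prop :=
  ∀ ⦃i j : ℕ⦄, i ≤ j → u i * u (j + 2) ≤ u (i + 1) * u (j + 1)

namespace RatioAntitone

variable {R : Type*} [CommMonoid R] [Preorder R] {u : ℕ → R}

theorem of_le_succ (h : RatioAntitone u) {i j : ℕ} (hij : i ≤ j + 1) :
    u i * u (j + 2) ≤ u (i + 1) * u (j + 1) := by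
  rcases Nat.lt_or_eq_of_le hij with hlt | rfl
  · exact h (Nat.lt_succ_iff.mp hlt)
  · exact (mul_comm _ _).le

theorem mul_le_sq (h : RatioAntitone u) (i : ℕ) : u i * u (i + 2) ≤ u (i + 1) ^ 2 :=
  (h le_rfl).trans_eq (sq _).symm

end RatioAntitone

namespace Polynomial

theorem ratioAntitone_coeff_C {R : Type*} [Semiring R] [Preorder R] (c : R) :
    RatioAntitone (C c).coeff := by
  intro i j _
  simp [coeff_C]

theorem coeff_X_sub_C_mul_zero {R : Type*} [Ring R] (p : R[X]) (a : R) :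
    ((X - C a) * p).coeff 0 = -a * p.coeff 0 := by
  simp [mul_coeff_zero]

section OrderedRing

variable {R : Type*} [CommRing R] [LinearOrder R] [IsStrictOrderedRing R]

theorem coeff_X_sub_C_mul_nonneg {p : R[X]} {a : R} (ha : a ≤ 0) (hp : ∀ k, 0 ≤ p.coeff k)
    (k : ℕ) : 0 ≤ ((X - C a) * p).coeff k := by
  rcases k with _ | k
  · rw [coeff_X_sub_C_mul_zero]
    exact mul_nonneg (neg_nonneg.mpr ha) (hp 0)
  · rw [coeff_X_sub_C_mul]
    linarith [hp k, mul_nonneg (neg_nonneg.mpr ha) (hp (k + 1))]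

theorem ratioAntitone_coeff_X_sub_C_mul {p : R[X]} {a : R} (ha : a ≤ 0)
    (hp : ∀ k, 0 ≤ p.coeff k) (h : RatioAntitone p.coeff) :
    RatioAntitone ((X - C a) * p).coeff := by
  intro i j hij
  rcases i with _ | i
  · simp only [coeff_X_sub_C_mul_zero, coeff_X_sub_C_mul, zero_add]
    linarith [mul_nonneg (hp 0) (hp j), mul_nonneg (neg_nonneg.mpr ha) (mul_nonneg (hp 1) (hp j)),
      mul_le_mul_of_nonneg_left (h (Nat.zero_le j)) (sq_nonneg a)]
  · obtain ⟨j, rfl⟩ : ∃ j', j = j' + 1 := ⟨j - 1, by omega⟩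
    replace hij : i ≤ j := by omega
    have hmid : p.coeff i * p.coeff (j + 3) ≤ p.coeff (i + 2) * p.coeff (j + 1) :=
      (h (by omega)).trans (h.of_le_succ (by omega))
    simp only [coeff_X_sub_C_mul]
    -- the terms `a * p.coeff (i + 1) * p.coeff (j + 2)` cancel, and the rest is
    -- `h hij + (-a) * hmid + a ^ 2 * h (Nat.succ_le_succ hij)`
    linarith [h hij, mul_le_mul_of_nonneg_left hmid (neg_nonneg.mpr ha),
      mul_le_mul_of_nonneg_left (h (Nat.succ_le_succ hij)) (sq_nonneg a)]

theorem coeff_nonneg_and_ratioAntitone_C_mul_prod_X_sub_C {c : R} (hc : 0 ≤ c) {s : Multiset R}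
    (hs : ∀ a ∈ s, a ≤ 0) :
    (∀ k, 0 ≤ (C c * (s.map (X - C ·)).prod).coeff k) ∧
      RatioAntitone (C c * (s.map (X - C ·)).prod).coeff := by
  induction s using Multiset.induction_on with
  | empty =>
    simp only [Multiset.map_zero, Multiset.prod_zero, mul_one]
    exact ⟨fun k => by rw [coeff_C]; split_ifs <;> simp [hc], ratioAntitone_coeff_C c⟩
  | cons a s ih =>
    obtain ⟨hnonneg, hratio⟩ := ih fun b hb => hs b (Multiset.mem_cons_of_mem hb)
    have ha : a ≤ 0 := hs a (Multiset.mem_cons_self a s)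
    rw [Multiset.map_cons, Multiset.prod_cons, mul_left_comm]
    exact ⟨coeff_X_sub_C_mul_nonneg ha hnonneg,
      ratioAntitone_coeff_X_sub_C_mul ha hnonneg hratio⟩

theorem eval_pos_of_coeff_nonneg {p : R[X]} (hp : ∀ k, 0 ≤ p.coeff k) (hp0 : p ≠ 0) {x : R}
    (hx : 0 < x) : 0 < p.eval x := by
  rw [eval_eq_sum_range]
  refine Finset.sum_pos' (fun i _ => mul_nonneg (hp i) (pow_nonneg hx.le i))
    ⟨p.natDegree, Finset.self_mem_range_succ _, mul_pos ?_ (pow_pos hx _)⟩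
  exact (hp _).lt_of_ne' (leadingCoeff_ne_zero.mpr hp0)

theorem nonpos_of_mem_roots_of_coeff_nonneg {p : R[X]} (hp : ∀ k, 0 ≤ p.coeff k) {a : R}
    (ha : a ∈ p.roots) : a ≤ 0 := by
  obtain ⟨hp0, hroot⟩ := mem_roots'.mp ha
  by_contra! hpos
  exact (eval_pos_of_coeff_nonneg hp hp0 hpos).ne' hroot

end OrderedRing

theorem splits_of_forall_im_eq_zero {p : ℝ[X]}
    (h : ∀ z : ℂ, (p.map (algebraMap ℝ ℂ)).IsRoot z → z.im = 0) : p.Splits :=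
  Splits.of_splits_map (algebraMap ℝ ℂ) (IsAlgClosed.splits _) fun z hz =>
    ⟨z.re, Complex.ext rfl (h z (mem_roots'.mp hz).2).symm⟩

end Polynomial

/-- Newton inequality consequence: a real-rooted polynomial with nonnegative
coefficients has a log-concave coefficient sequence. -/
theorem newton_log_concave (f : Polynomial ℝ)
    (hcoeff : ∀ k, 0 ≤ f.coeff k)
    (hroots : ∀ z : ℂ, (f.map (algebraMap ℝ ℂ)).IsRoot z → z.im = 0) :
    ∀ k, 1 ≤ k → k ≤ f.natDegree - 1 →
      f.coeff k ^ 2 ≥ f.coeff (k - 1) * f.coeff (k + 1) := by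
  intro k hk _
  obtain ⟨i, rfl⟩ := Nat.exists_eq_add_of_le' hk
  have hlead : 0 ≤ f.leadingCoeff := hcoeff f.natDegree
  have hroots_nonpos : ∀ a ∈ f.roots, a ≤ 0 :=
    fun _ => nonpos_of_mem_roots_of_coeff_nonneg hcoeff
  have hratio := (coeff_nonneg_and_ratioAntitone_C_mul_prod_X_sub_C hlead hroots_nonpos).2
  rw [← (splits_of_forall_im_eq_zero hroots).eq_prod_roots] at hratio
  simpa using hratio.mul_le_sq i
end

section
/- For all natural numbers a, b, N with N ≤ a and N ≤ b, the polynomial Q(t) = Σ_{j=0}^N C(a, N-j) C(b, j) t^j has all roots real. -/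
/-!
Up to the factor `N! (t+1)^(a-N) t^b`, the `N`-th derivative of `(t+1)^a t^b` evaluated at `t = w`
is `Q(1 + 1/w)`. The polynomial `(t+1)^a t^b` has only real roots, and by Rolle's theorem so do
all its derivatives; hence `w = 1/(z-1)` is real for every root `z` of `Q`, and so is `z`.
-/

open Finset Nat

namespace Polynomial

theorem iterate_derivative_ne_zero {R : Type*} [Semiring R] [IsAddTorsionFree R]
    {p : R[X]} (hp : p ≠ 0) {k : ℕ} (hk : k ≤ p.natDegree) : derivative^[k] p ≠ 0 := by
  intro h
  have hcoeff := congr_arg (coeff · (p.natDegree - k)) h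
  simp only [coeff_iterate_derivative, Nat.sub_add_cancel hk, coeff_zero] at hcoeff
  exact smul_ne_zero (descFactorial_pos.mpr hk).ne' (leadingCoeff_ne_zero.mpr hp) hcoeff

theorem Splits.derivative_real {p : ℝ[X]} (hp : p.Splits) : (derivative p).Splits := by
  rw [splits_iff_card_roots] at hp ⊢
  have h₁ := card_roots_le_derivative p
  have h₂ := card_roots' (derivative p)
  have h₃ := natDegree_derivative_le p
  omega

theorem Splits.iterate_derivative_real {p : ℝ[X]} (hp : p.Splits) (k : ℕ) :
    (derivative^[k] p).Splits := by
  induction k with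
  | zero => exact hp
  | succ k ih => rw [Function.iterate_succ_apply']; exact ih.derivative_real

theorem iterate_derivative_X_add_C_pow_mul_X_pow {R : Type*} [CommSemiring R] (c : R)
    (a b N : ℕ) :
    derivative^[N] ((X + C c) ^ a * X ^ b) =
      ∑ j ∈ range (N + 1),
        (N ! * a.choose (N - j) * b.choose j) • ((X + C c) ^ (a - (N - j)) * X ^ (b - j)) := by
  rw [iterate_derivative_mul]
  refine sum_congr rfl fun j hj => ?_
  have hjN : j ≤ N := Nat.lt_succ_iff.mp (mem_range.mp hj)
  rw [iterate_derivative_X_add_pow, iterate_derivative_X_pow_eq_natCast_mul,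
    descFactorial_eq_factorial_mul_choose, descFactorial_eq_factorial_mul_choose,
    ← choose_mul_factorial_mul_factorial hjN]
  simp only [nsmul_eq_mul]
  push_cast
  ring

theorem eval_iterate_derivative_X_add_one_pow_mul_X_pow {R : Type*} [CommSemiring R]
    {a b N : ℕ} (ha : N ≤ a) (hb : N ≤ b) {w z : R} (hwz : w + 1 = w * z) :
    (derivative^[N] ((X + 1) ^ a * X ^ b)).eval w =
      N ! * (w + 1) ^ (a - N) * w ^ b *
        ∑ j ∈ range (N + 1), ((a.choose (N - j) * b.choose j : ℕ) : R) * z ^ j := by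
  rw [← C_1, iterate_derivative_X_add_C_pow_mul_X_pow, eval_finsetSum, mul_sum]
  refine sum_congr rfl fun j hj => ?_
  have hjN : j ≤ N := Nat.lt_succ_iff.mp (mem_range.mp hj)
  have hw : w ^ b = w ^ j * w ^ (b - j) := by rw [← pow_add]; congr 1; omega
  rw [eval_smul, eval_mul, eval_pow, eval_pow, eval_add, eval_X, eval_C, nsmul_eq_mul,
    show a - (N - j) = a - N + j by omega, pow_add, hwz, hw, mul_pow]
  push_cast
  ring

end Polynomial

open Polynomial in
/-- The polynomial `Q(t) = ∑_{j=0}^N C(a, N-j) C(b, j) t^j` has all roots real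
(it is a Jacobi polynomial in disguise). -/
theorem binomial_poly_real_rooted (a b N : ℕ) (hNa : N ≤ a) (hNb : N ≤ b) :
    ∀ z : ℂ,
      ((∑ j ∈ Finset.range (N + 1),
          C ((a.choose (N - j) * b.choose j : ℕ) : ℝ) * X ^ j).map
        (algebraMap ℝ ℂ)).IsRoot z → z.im = 0 := by
  intro z hz
  obtain rfl | hz1 := eq_or_ne z 1
  · exact Complex.one_im
  set F : ℝ[X] := derivative^[N] ((X + 1) ^ a * X ^ b)
  have hF : F.Splits := (((Splits.X_add_C 1).pow a).mul (Splits.X_pow b)).iterate_derivative_real N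
  have hF0 : F ≠ 0 := by
    have hp0 : (X + 1 : ℝ[X]) ^ a ≠ 0 := pow_ne_zero _ (X_add_C_ne_zero 1)
    have hq0 : (X : ℝ[X]) ^ b ≠ 0 := pow_ne_zero _ X_ne_zero
    refine iterate_derivative_ne_zero (mul_ne_zero hp0 hq0) ?_
    rw [natDegree_mul hp0 hq0, natDegree_X_pow]
    omega
  have hwz : (z - 1)⁻¹ + 1 = (z - 1)⁻¹ * z := by field_simp [sub_ne_zero.mpr hz1]; ring
  have hQ : ∑ j ∈ Finset.range (N + 1), ((a.choose (N - j) * b.choose j : ℕ) : ℂ) * z ^ j = 0 := by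
    simpa [eval_finsetSum] using hz
  have hw : (F.map (algebraMap ℝ ℂ)).IsRoot (z - 1)⁻¹ := by
    rw [IsRoot, ← iterate_derivative_map]
    simp only [Polynomial.map_mul, Polynomial.map_pow, Polynomial.map_add, map_X, Polynomial.map_one]
    rw [eval_iterate_derivative_X_add_one_pow_mul_X_pow hNa hNb hwz, hQ, mul_zero]
  obtain ⟨r, hr⟩ := hF.mem_range_of_isRoot hF0 hw
  have hz : z = ((1 + r⁻¹ : ℝ) : ℂ) := by
    push_cast
    rw [show (r : ℂ) = (z - 1)⁻¹ from hr, inv_inv]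
    ring
  rw [hz, Complex.ofReal_im]
end

section
/- For all natural numbers a, b, N with N ≤ a and N ≤ b, the sequence k ↦ Σ_{i+j=N, 0≤i≤a, 0≤j≤b} C(a,i) C(b,j) C(N+j+c, k) is log-concave in k for any natural number c; that is, setting S_k = Σ_{j=0}^N C(a, N-j) C(b, j) C(N+j+c, k), one has S_k^2 ≥ S_{k-1} S_{k+1} for all k ≥ 1. -/
/-!
By Vandermonde, `C(N+j+c, k) = ∑ₘ C(j, m) C(N+c, k-m)`, so `S_k` is the convolution of the
binomial row of `N + c` with `u m = ∑ⱼ C(a, N-j) C(b, j) C(j, m)`, which equals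
`C(b, m) C(a+b-m, N-m)` for `m ≤ N` and vanishes beyond. The sequence `u` is log-concave as the
product of a row and a diagonal of Pascal's triangle, and its support is an initial segment.
Convolving with `(1, 1)` preserves both properties, and `N + c` such steps produce `S`.
-/

open Finset

theorem Nat.choose_mul_choose_add_two_le_sq (n k : ℕ) :
    n.choose k * n.choose (k + 2) ≤ n.choose (k + 1) ^ 2 := by
  have h₁ := Nat.choose_succ_right_eq n k
  have h₂ := Nat.choose_succ_right_eq n (k + 1)
  have hmono : (n - (k + 1)) * (k + 1) ≤ (n - k) * (k + 2) := Nat.mul_le_mul (by omega) (by omega)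
  refine Nat.le_of_mul_le_mul_right (c := (k + 1) * (k + 2)) ?_ (by positivity)
  calc n.choose k * n.choose (k + 2) * ((k + 1) * (k + 2))
      = n.choose k * n.choose (k + 1) * ((n - (k + 1)) * (k + 1)) := by
        linear_combination (n.choose k * (k + 1)) * h₂
    _ ≤ n.choose k * n.choose (k + 1) * ((n - k) * (k + 2)) := by gcongr
    _ = n.choose (k + 1) ^ 2 * ((k + 1) * (k + 2)) := by
        linear_combination (n.choose (k + 1) * (k + 2)) * h₁.symm

theorem Nat.choose_mul_add_two_choose_add_two_le_sq (n k : ℕ) :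
    n.choose k * (n + 2).choose (k + 2) ≤ (n + 1).choose (k + 1) ^ 2 := by
  rcases lt_or_ge n k with hnk | hkn
  · simp [Nat.choose_eq_zero_of_lt hnk]
  have h₁ := Nat.add_one_mul_choose_eq n k
  have h₂ := Nat.add_one_mul_choose_eq (n + 1) (k + 1)
  have hmono : (k + 1) * (n + 2) ≤ (n + 1) * (k + 2) := by nlinarith
  refine Nat.le_of_mul_le_mul_right (c := (n + 1) * (k + 2)) ?_ (by positivity)
  calc n.choose k * (n + 2).choose (k + 2) * ((n + 1) * (k + 2))
      = (n + 1).choose (k + 1) ^ 2 * ((k + 1) * (n + 2)) := by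
        linear_combination ((n + 2).choose (k + 2) * (k + 2)) * h₁ +
          ((n + 1).choose (k + 1) * (k + 1)) * h₂.symm
    _ ≤ (n + 1).choose (k + 1) ^ 2 * ((n + 1) * (k + 2)) := by gcongr

def LogConcave (f : ℕ → ℕ) : Prop :=
  ∀ k, f k * f (k + 2) ≤ f (k + 1) ^ 2

def SupportDownwardClosed (f : ℕ → ℕ) : Prop :=
  ∀ k, f k = 0 → f (k + 1) = 0

def pascalStep (f : ℕ → ℕ) : ℕ → ℕ
  | 0 => f 0
  | k + 1 => f (k + 1) + f k

theorem SupportDownwardClosed.pascalStep {f : ℕ → ℕ} (hf : SupportDownwardClosed f) :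
    SupportDownwardClosed (pascalStep f) := by
  rintro (_ | k) h
  · simp only [_root_.pascalStep] at h ⊢
    simp [h, hf 0 h]
  · simp only [_root_.pascalStep, Nat.add_eq_zero_iff] at h ⊢
    exact ⟨hf _ h.1, h.1⟩

theorem LogConcave.mul_add_three_le {f : ℕ → ℕ} (hf : LogConcave f)
    (hz : SupportDownwardClosed f) (k : ℕ) : f k * f (k + 3) ≤ f (k + 1) * f (k + 2) := by
  rcases Nat.eq_zero_or_pos (f (k + 1) * f (k + 2)) with h | h
  · have : f (k + 3) = 0 := by
      rcases Nat.mul_eq_zero.1 h with h | h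
      · exact hz _ (hz _ h)
      · exact hz _ h
    simp [this]
  refine Nat.le_of_mul_le_mul_right (c := f (k + 1) * f (k + 2)) ?_ h
  calc f k * f (k + 3) * (f (k + 1) * f (k + 2))
      = (f k * f (k + 2)) * (f (k + 1) * f (k + 3)) := by ring
    _ ≤ f (k + 1) ^ 2 * f (k + 2) ^ 2 := Nat.mul_le_mul (hf k) (hf (k + 1))
    _ = f (k + 1) * f (k + 2) * (f (k + 1) * f (k + 2)) := by ring

theorem LogConcave.pascalStep {f : ℕ → ℕ} (hf : LogConcave f) (hz : SupportDownwardClosed f) :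
    LogConcave (pascalStep f) := by
  rintro (_ | k)
  · simp only [_root_.pascalStep]
    nlinarith [hf 0]
  · simp only [_root_.pascalStep]
    nlinarith [hf k, hf (k + 1), hf.mul_add_three_le hz k]

def binomialConv (f : ℕ → ℕ) (n k : ℕ) : ℕ :=
  ∑ m ∈ range (k + 1), f m * n.choose (k - m)

theorem binomialConv_zero (f : ℕ → ℕ) : binomialConv f 0 = f := by
  funext k
  rw [binomialConv, sum_eq_single_of_mem k (self_mem_range_succ k)]
  · simp
  · intro m hm hmk
    rw [Nat.choose_eq_zero_of_lt (by simp at hm; omega), mul_zero]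

theorem binomialConv_succ (f : ℕ → ℕ) (n : ℕ) :
    binomialConv f (n + 1) = pascalStep (binomialConv f n) := by
  funext k
  cases k with
  | zero => simp [binomialConv, pascalStep]
  | succ k =>
    have hpascal : ∀ m ∈ range (k + 1), f m * (n + 1).choose (k + 1 - m)
        = f m * n.choose (k + 1 - m) + f m * n.choose (k - m) := by
      intro m hm
      rw [show k + 1 - m = k - m + 1 by simp at hm; omega, Nat.choose_succ_succ']
      ring
    simp only [binomialConv, pascalStep]
    rw [sum_range_succ, sum_range_succ (fun m => f m * n.choose (k + 1 - m)),
      sum_congr rfl hpascal, sum_add_distrib]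
    simp only [Nat.sub_self, Nat.choose_zero_right]
    ring

theorem LogConcave.binomialConv {f : ℕ → ℕ} (hf : LogConcave f) (hz : SupportDownwardClosed f)
    (n : ℕ) : LogConcave (_root_.binomialConv f n) := by
  suffices LogConcave (_root_.binomialConv f n) ∧ SupportDownwardClosed (_root_.binomialConv f n)
    from this.1
  induction n with
  | zero => simpa [binomialConv_zero] using ⟨hf, hz⟩
  | succ n ih =>
    rw [binomialConv_succ]
    exact ⟨ih.1.pascalStep ih.2, ih.2.pascalStep⟩

theorem sum_mul_add_choose_eq_binomialConv (s : Finset ℕ) (w : ℕ → ℕ) (n k : ℕ) :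
    ∑ j ∈ s, w j * (j + n).choose k =
      binomialConv (fun m => ∑ j ∈ s, w j * j.choose m) n k := by
  simp_rw [Nat.add_choose_eq, Nat.sum_antidiagonal_eq_sum_range_succ_mk, mul_sum, binomialConv,
    sum_mul, mul_assoc]
  exact sum_comm

theorem supportDownwardClosed_sum_mul_choose (s : Finset ℕ) (w : ℕ → ℕ) :
    SupportDownwardClosed (fun m => ∑ j ∈ s, w j * j.choose m) := by
  intro m h
  simp only [sum_eq_zero_iff, mul_eq_zero, Nat.choose_eq_zero_iff] at h ⊢
  exact fun j hj => (h j hj).imp id (fun hjm => by omega)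

theorem sum_choose_mul_choose_mul_choose (a b N m : ℕ) (hm : m ≤ N) :
    ∑ j ∈ range (N + 1), a.choose (N - j) * b.choose j * j.choose m
      = b.choose m * (a + b - m).choose (N - m) := by
  have hterm : ∀ t, a.choose (N - (m + t)) * b.choose (m + t) * (m + t).choose m
      = b.choose m * ((b - m).choose t * a.choose (N - m - t)) := by
    intro t
    rw [mul_assoc, Nat.choose_mul (Nat.le_add_right m t), Nat.add_sub_cancel_left,
      show N - (m + t) = N - m - t by omega]
    ring
  rw [show N + 1 = m + (N - m + 1) by omega, sum_range_add,
    sum_eq_zero fun j hj => by simp [Nat.choose_eq_zero_of_lt (mem_range.1 hj)], zero_add]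
  simp_rw [hterm, ← mul_sum]
  rcases lt_or_ge b m with hbm | hmb
  · simp [Nat.choose_eq_zero_of_lt hbm]
  rw [show a + b - m = b - m + a by omega, Nat.add_choose_eq,
    Nat.sum_antidiagonal_eq_sum_range_succ_mk]

theorem sum_choose_mul_choose_mul_choose_eq_zero {a b N m : ℕ} (hm : N < m ∨ b < m) :
    ∑ j ∈ range (N + 1), a.choose (N - j) * b.choose j * j.choose m = 0 := by
  refine sum_eq_zero fun j hj => ?_
  rcases lt_or_ge j m with hjm | hmj
  · simp [Nat.choose_eq_zero_of_lt hjm]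
  · simp [Nat.choose_eq_zero_of_lt (show b < j by simp at hj; omega)]

theorem logConcave_sum_choose_mul_choose_mul_choose (a b N : ℕ) :
    LogConcave (fun m => ∑ j ∈ range (N + 1), a.choose (N - j) * b.choose j * j.choose m) := by
  intro m
  dsimp only
  by_cases hm : m + 2 ≤ N ∧ m + 2 ≤ b
  swap
  · rw [sum_choose_mul_choose_mul_choose_eq_zero (m := m + 2) (by omega), mul_zero]
    exact Nat.zero_le _
  simp only [sum_choose_mul_choose_mul_choose a b N _ (by omega : m ≤ N),
    sum_choose_mul_choose_mul_choose a b N _ (by omega : m + 1 ≤ N),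
    sum_choose_mul_choose_mul_choose a b N _ hm.1]
  obtain ⟨x, hx⟩ : ∃ x, a + b - m = x + 2 := ⟨a + b - m - 2, by omega⟩
  obtain ⟨y, hy⟩ : ∃ y, N - m = y + 2 := ⟨N - m - 2, by omega⟩
  rw [hx, hy, show a + b - (m + 1) = x + 1 by omega, show a + b - (m + 2) = x by omega,
    show N - (m + 1) = y + 1 by omega, show N - (m + 2) = y by omega]
  calc b.choose m * (x + 2).choose (y + 2) * (b.choose (m + 2) * x.choose y)
      = (b.choose m * b.choose (m + 2)) * (x.choose y * (x + 2).choose (y + 2)) := by ring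
    _ ≤ b.choose (m + 1) ^ 2 * (x + 1).choose (y + 1) ^ 2 :=
      Nat.mul_le_mul (Nat.choose_mul_choose_add_two_le_sq b m)
        (Nat.choose_mul_add_two_choose_add_two_le_sq x y)
    _ = (b.choose (m + 1) * (x + 1).choose (y + 1)) ^ 2 := by ring

theorem S_log_concave_general (a b N c : ℕ) :
    ∀ k, 1 ≤ k →
      (∑ j ∈ Finset.range (N + 1), a.choose (N - j) * b.choose j * (N + j + c).choose k) ^ 2 ≥
        (∑ j ∈ Finset.range (N + 1),
            a.choose (N - j) * b.choose j * (N + j + c).choose (k - 1)) *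
        (∑ j ∈ Finset.range (N + 1),
            a.choose (N - j) * b.choose j * (N + j + c).choose (k + 1)) := by
  intro k hk
  obtain ⟨k, rfl⟩ : ∃ k', k = k' + 1 := ⟨k - 1, by omega⟩
  have hS : ∀ i, ∑ j ∈ range (N + 1), a.choose (N - j) * b.choose j * (N + j + c).choose i
      = binomialConv (fun m => ∑ j ∈ range (N + 1), a.choose (N - j) * b.choose j * j.choose m)
          (N + c) i := by
    intro i
    simp_rw [show ∀ j, N + j + c = j + (N + c) by omega]
    exact sum_mul_add_choose_eq_binomialConv _ _ _ _
  rw [hS, hS, hS, Nat.add_sub_cancel]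
  exact (logConcave_sum_choose_mul_choose_mul_choose a b N).binomialConv
    (supportDownwardClosed_sum_mul_choose _ _) (N + c) k

theorem S_log_concave (a b N c : ℕ) (hNa : N ≤ a) (hNb : N ≤ b) :
    ∀ k, 1 ≤ k →
      (∑ j ∈ Finset.range (N + 1), a.choose (N - j) * b.choose j * (N + j + c).choose k) ^ 2 ≥
        (∑ j ∈ Finset.range (N + 1),
            a.choose (N - j) * b.choose j * (N + j + c).choose (k - 1)) *
        (∑ j ∈ Finset.range (N + 1),
            a.choose (N - j) * b.choose j * (N + j + c).choose (k + 1)) :=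
  S_log_concave_general a b N c
end

section
/- For all natural numbers a, b and all i in {0,...,b} and j in {0,...,a+b-i}, the coefficient of x_1^j x_2^i x_3^j in the expansion of (x_1 x_3 + 1)^a (x_1 x_3 + x_2 + 1)^b equals C(b,i) C(a+b-i, j), and every monomial appearing in the expansion is of this form. -/
/-!
Write `x₁x₃ + x₂ + 1 = x₂ + (x₁x₃ + 1)` and expand the `b`-th power binomially: the `i`-th term
`C(b,i) x₂^i (x₁x₃ + 1)^(b-i)` combines with `(x₁x₃ + 1)^a` into `C(b,i) x₂^i (x₁x₃ + 1)^(a+b-i)`,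
and a second binomial expansion gives `∑ C(b,i) C(a+b-i,j) x₂^i (x₁x₃)^j`. The monomials
`x₁^j x₂^i x₃^j` of this sum are pairwise distinct, so it is the monomial expansion itself
(here `x₁, x₂, x₃` are `X 0, X 1, X 2`).
-/

open MvPolynomial Finset

namespace MvPolynomial

variable {R σ ι : Type*} [CommSemiring R]

theorem coeff_sum_monomial_of_injective {e : ι → σ →₀ ℕ} (he : Function.Injective e)
    (s : Finset ι) (c : ι → R) {k : ι} (hk : k ∈ s) :
    coeff (e k) (∑ x ∈ s, monomial (e x) (c x)) = c k := by
  classical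
  rw [coeff_sum, sum_eq_single_of_mem k hk fun x _ hx => by rw [coeff_monomial, if_neg (he.ne hx)],
    coeff_monomial, if_pos rfl]

theorem exists_eq_of_coeff_sum_monomial_ne_zero {s : Finset ι} {e : ι → σ →₀ ℕ} {c : ι → R}
    {d : σ →₀ ℕ} (h : coeff d (∑ x ∈ s, monomial (e x) (c x)) ≠ 0) : ∃ x ∈ s, e x = d := by
  classical
  by_contra! hd
  exact h <| by
    rw [coeff_sum]
    exact sum_eq_zero fun x hx => by rw [coeff_monomial, if_neg (hd x hx)]

end MvPolynomial

def inwardIndices (a b : ℕ) : Finset (ℕ × ℕ) :=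
  (range (b + 1) ×ˢ range (a + b + 1)).filter fun p => p.2 ≤ a + b - p.1

theorem mem_inwardIndices {a b : ℕ} {p : ℕ × ℕ} :
    p ∈ inwardIndices a b ↔ p.1 ≤ b ∧ p.2 ≤ a + b - p.1 := by
  simp only [inwardIndices, mem_filter, mem_product, mem_range]
  omega

theorem sum_inwardIndices {M : Type*} [AddCommMonoid M] (a b : ℕ) (f : ℕ × ℕ → M) :
    ∑ p ∈ inwardIndices a b, f p = ∑ i ∈ range (b + 1), ∑ j ∈ range (a + b - i + 1), f (i, j) :=
  sum_finset_product _ _ _ fun p => by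
    rw [mem_inwardIndices, mem_range, mem_range]
    omega

theorem add_one_pow_mul_add_add_one_pow {R : Type*} [CommSemiring R] (u v : R) (a b : ℕ) :
    (u + 1) ^ a * (u + v + 1) ^ b =
      ∑ p ∈ inwardIndices a b, (b.choose p.1 * (a + b - p.1).choose p.2 : R) * v ^ p.1 * u ^ p.2 := by
  rw [sum_inwardIndices, show u + v + 1 = v + (u + 1) by ring, add_pow v, mul_sum]
  refine sum_congr rfl fun i hi => ?_
  have hib : a + b - i = a + (b - i) := by
    have := mem_range.1 hi
    omega
  calc (u + 1) ^ a * (v ^ i * (u + 1) ^ (b - i) * b.choose i)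
      = b.choose i * v ^ i * (u + 1) ^ (a + b - i) := by rw [hib, pow_add]; ring
    _ = _ := by
      rw [add_pow, mul_sum]
      refine sum_congr rfl fun j _ => ?_
      ring

noncomputable def inwardExponent (p : ℕ × ℕ) : Fin 3 →₀ ℕ :=
  Finsupp.single 0 p.2 + Finsupp.single 1 p.1 + Finsupp.single 2 p.2

theorem inwardExponent_injective : Function.Injective inwardExponent := fun p q h => by
  have h₀ := DFunLike.congr_fun h 0
  have h₁ := DFunLike.congr_fun h 1
  simp only [inwardExponent, Finsupp.add_apply, Finsupp.single_apply] at h₀ h₁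
  exact Prod.ext (by simpa using h₁) (by simpa using h₀)

theorem X_pow_mul_X_mul_X_pow {R : Type*} [CommSemiring R] (p : ℕ × ℕ) :
    (X 1 ^ p.1 * (X 0 * X 2) ^ p.2 : MvPolynomial (Fin 3) R) = monomial (inwardExponent p) 1 := by
  simp only [inwardExponent, mul_pow, X_pow_eq_monomial, monomial_mul, mul_one]
  congr 1
  rw [add_comm, add_right_comm]

theorem inward_expansion_eq_sum_monomial {R : Type*} [CommSemiring R] (a b : ℕ) :
    ((X 0 * X 2 + 1) ^ a * (X 0 * X 2 + X 1 + 1) ^ b : MvPolynomial (Fin 3) R) =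
      ∑ p ∈ inwardIndices a b,
        monomial (inwardExponent p) (b.choose p.1 * (a + b - p.1).choose p.2 : R) := by
  rw [add_one_pow_mul_add_add_one_pow]
  refine sum_congr rfl fun p _ => ?_
  rw [mul_assoc, X_pow_mul_X_mul_X_pow, ← map_natCast (C : R →+* MvPolynomial (Fin 3) R),
    ← map_natCast (C : R →+* MvPolynomial (Fin 3) R), ← map_mul, C_mul_monomial, mul_one]

theorem inward_expansion_coeff (a b : ℕ) :
    (∀ i j : ℕ, i ≤ b → j ≤ a + b - i →
      MvPolynomial.coeff
          (Finsupp.single (0 : Fin 3) j + Finsupp.single 1 i + Finsupp.single 2 j)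
          ((X 0 * X 2 + 1) ^ a * (X 0 * X 2 + X 1 + 1) ^ b : MvPolynomial (Fin 3) ℤ)
        = (b.choose i * (a + b - i).choose j : ℤ)) ∧
    (∀ d : Fin 3 →₀ ℕ,
      MvPolynomial.coeff d
          ((X 0 * X 2 + 1) ^ a * (X 0 * X 2 + X 1 + 1) ^ b : MvPolynomial (Fin 3) ℤ) ≠ 0 →
      ∃ i j : ℕ, i ≤ b ∧ j ≤ a + b - i ∧
        d = Finsupp.single (0 : Fin 3) j + Finsupp.single 1 i + Finsupp.single 2 j) := by
  rw [inward_expansion_eq_sum_monomial]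
  refine ⟨fun i j hi hj => ?_, fun d hd => ?_⟩
  · exact coeff_sum_monomial_of_injective inwardExponent_injective _ _
      (k := (i, j)) (mem_inwardIndices.2 ⟨hi, hj⟩)
  · obtain ⟨⟨i, j⟩, hij, rfl⟩ := exists_eq_of_coeff_sum_monomial_ne_zero hd
    exact ⟨i, j, (mem_inwardIndices.1 hij).1, (mem_inwardIndices.1 hij).2, rfl⟩
end

section
/- For all natural numbers a, b, the polynomial (x_1 x_3 + 1)^a (x_1 x_3 + x_2 + 1)^b in ℤ[x_1,x_2,x_3] is log-concave: for every fixed pair of exponents of two of the variables, the sequence of coefficients along the remaining variable satisfies c_k^2 ≥ c_{k-1} c_{k+1}. -/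
open MvPolynomial Finset

lemma fs_eq (m k : ℕ) (d : Fin 3 →₀ ℕ) :
    Finsupp.single 0 m + Finsupp.single 1 k + Finsupp.single 2 m = d ↔
      d 0 = m ∧ d 1 = k ∧ d 2 = m := by
  constructor
  · rintro rfl
    refine ⟨?_, ?_, ?_⟩ <;> simp [Finsupp.single_apply]
  · rintro ⟨h0, h1, h2⟩
    ext i
    fin_cases i <;> simp [Finsupp.single_apply, h0, h1, h2]

lemma key (a b : ℕ) :
    ((X 0 * X 2 + 1) ^ a * (X 0 * X 2 + X 1 + 1) ^ b : MvPolynomial (Fin 3) ℤ) =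
    ∑ k ∈ range (b+1), ∑ m ∈ range (a + b - k + 1),
      monomial (Finsupp.single 0 m + Finsupp.single 1 k + Finsupp.single 2 m)
        ((b.choose k : ℤ) * ((a+b-k).choose m)) := by
  rw [show ((X 0 * X 2 + X 1 + 1) ^ b : MvPolynomial (Fin 3) ℤ) =
      ∑ k ∈ range (b+1), X 1 ^ k * (X 0 * X 2 + 1) ^ (b - k) * (b.choose k : MvPolynomial (Fin 3) ℤ)
    from by rw [show (X 0 * X 2 + X 1 + 1 : MvPolynomial (Fin 3) ℤ) = X 1 + (X 0 * X 2 + 1) by ring,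
      add_pow], Finset.mul_sum]
  refine Finset.sum_congr rfl fun k hk => ?_
  rw [Finset.mem_range] at hk
  have hk' : k ≤ b := Nat.lt_succ_iff.mp hk
  have h1 : ((X 0 * X 2 + 1 : MvPolynomial (Fin 3) ℤ)) ^ a *
      (X 1 ^ k * (X 0 * X 2 + 1) ^ (b - k) * (b.choose k : MvPolynomial (Fin 3) ℤ)) =
      X 1 ^ k * (b.choose k : MvPolynomial (Fin 3) ℤ) * (X 0 * X 2 + 1) ^ (a + b - k) := by
    rw [Nat.add_sub_assoc hk', pow_add]; ring
  rw [h1, show ((X 0 * X 2 + 1) : MvPolynomial (Fin 3) ℤ) ^ (a + b - k) =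
    ∑ m ∈ range (a + b - k + 1), (X 0 * X 2) ^ m * ((a+b-k).choose m : MvPolynomial (Fin 3) ℤ)
    from by rw [add_pow]; simp, Finset.mul_sum]
  refine Finset.sum_congr rfl fun m hm => ?_
  rw [show ((b.choose k : ℕ) : MvPolynomial (Fin 3) ℤ) = C (b.choose k : ℤ) by simp,
      show (((a+b-k).choose m : ℕ) : MvPolynomial (Fin 3) ℤ) = C ((a+b-k).choose m : ℤ) by simp]
  rw [mul_pow, X_pow_eq_monomial, X_pow_eq_monomial, X_pow_eq_monomial]
  simp only [C_apply, monomial_mul, add_zero, one_mul, mul_one]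
  rw [show (Finsupp.single 1 k) + ((Finsupp.single 0 m) + Finsupp.single 2 m)
      = (((Finsupp.single 0 m : Fin 3 →₀ ℕ) + Finsupp.single 1 k) + Finsupp.single 2 m) from by abel]

lemma coeff_P (a b : ℕ) (d : Fin 3 →₀ ℕ) :
    MvPolynomial.coeff d
        ((X 0 * X 2 + 1) ^ a * (X 0 * X 2 + X 1 + 1) ^ b : MvPolynomial (Fin 3) ℤ) =
      if d 0 = d 2 then ((b.choose (d 1) : ℤ) * ((a + b - d 1).choose (d 0))) else 0 := by
  rw [key]
  rw [coeff_sum]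
  simp only [coeff_sum, coeff_monomial]
  by_cases h02 : d 0 = d 2
  · rw [if_pos h02]
    rw [Finset.sum_eq_single (d 1)]
    · rw [Finset.sum_eq_single (d 0)]
      · rw [if_pos]
        rw [fs_eq]
        exact ⟨rfl, rfl, h02.symm⟩
      · intro m hm hne
        rw [if_neg]
        rw [fs_eq]
        rintro ⟨h0, -, -⟩; exact hne h0.symm
      · intro h
        rw [Finset.mem_range, not_lt] at h
        rw [if_pos (by rw [fs_eq]; exact ⟨rfl, rfl, h02.symm⟩)]
        have hz : (a + b - d 1).choose (d 0) = 0 := Nat.choose_eq_zero_of_lt (by omega)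
        rw [hz]
        simp
    · intro k hk hne
      refine Finset.sum_eq_zero fun m hm => ?_
      rw [if_neg]
      rw [fs_eq]
      rintro ⟨-, h1, -⟩; exact hne h1.symm
    · intro h
      rw [Finset.mem_range, not_lt] at h
      refine Finset.sum_eq_zero fun m hm => ?_
      have hz : b.choose (d 1) = 0 := Nat.choose_eq_zero_of_lt (by omega)
      rw [hz]
      simp
  · rw [if_neg h02]
    refine Finset.sum_eq_zero fun k hk => Finset.sum_eq_zero fun m hm => ?_
    rw [if_neg]
    rw [fs_eq]
    rintro ⟨h0, -, h2⟩; exact h02 (h0.trans h2.symm)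

lemma lemA (n j : ℕ) : n.choose j * n.choose (j+2) ≤ (n.choose (j+1))^2 := by
  rcases Nat.lt_or_ge n (j+2) with h | h
  · rw [Nat.choose_eq_zero_of_lt h]; simp
  · obtain ⟨t, rfl⟩ : ∃ t, n = j + 2 + t := ⟨n - (j+2), by omega⟩
    set A := (j+2+t).choose j with hA
    set B := (j+2+t).choose (j+1) with hB
    set D := (j+2+t).choose (j+2) with hD
    have h1 : D * (j+2) = B * (t+1) := by
      have := Nat.choose_succ_right_eq (j+2+t) (j+1)
      rw [show j+2+t - (j+1) = t+1 by omega] at this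
      simpa [hD, hB] using this
    have h2 : B * (j+1) = A * (t+2) := by
      have := Nat.choose_succ_right_eq (j+2+t) j
      rw [show j+2+t - j = t+2 by omega] at this
      simpa [hB, hA] using this
    have hpos : 0 < (j+1)*(j+2) := by positivity
    have key : A * D * ((j+1)*(j+2)) ≤ B^2 * ((j+1)*(j+2)) := by
      calc A * D * ((j+1)*(j+2)) = (A*(j+1)) * (D*(j+2)) := by ring
        _ = (A*(j+1)) * (B*(t+1)) := by rw [h1]
        _ = (A*B) * ((j+1)*(t+1)) := by ring
        _ ≤ (A*B) * ((j+2)*(t+2)) :=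
            Nat.mul_le_mul_left _ (Nat.mul_le_mul (by omega) (by omega))
        _ = (A*(t+2)) * (B*(j+2)) := by ring
        _ = (B*(j+1)) * (B*(j+2)) := by rw [h2]
        _ = B^2 * ((j+1)*(j+2)) := by ring
    exact Nat.le_of_mul_le_mul_right key hpos

lemma lemB (n m : ℕ) (hn : 1 ≤ n) : (n-1).choose m * (n+1).choose m ≤ (n.choose m)^2 := by
  rcases Nat.lt_or_ge (n-1) m with h | h
  · rw [Nat.choose_eq_zero_of_lt h]; simp
  · obtain ⟨s, hs, rfl⟩ : ∃ s, 1 ≤ s ∧ n = m + s := ⟨n - m, by omega, by omega⟩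
    set A := (m+s-1).choose m with hA
    set B := (m+s).choose m with hB
    set D := (m+s+1).choose m with hD
    have h1 : B * (m+s+1) = D * (s+1) := by
      have := Nat.choose_mul_succ_eq (m+s) m
      rw [show m+s+1 - m = s+1 by omega] at this
      simpa [hB, hD] using this
    have h2 : A * (m+s) = B * s := by
      have := Nat.choose_mul_succ_eq (m+s-1) m
      rw [show m+s-1+1 = m+s by omega, show m+s - m = s by omega] at this
      simpa [hA, hB] using this
    have hpos : 0 < (m+s)*(s+1) := by positivity
    have key : A * D * ((m+s)*(s+1)) ≤ B^2 * ((m+s)*(s+1)) := by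
      calc A * D * ((m+s)*(s+1)) = (A*(m+s)) * (D*(s+1)) := by ring
        _ = (B*s) * (D*(s+1)) := by rw [h2]
        _ = (B*s) * (B*(m+s+1)) := by rw [h1]
        _ = B^2 * (s*(m+s+1)) := by ring
        _ ≤ B^2 * ((m+s)*(s+1)) :=
            Nat.mul_le_mul_left _ (by nlinarith)
    exact Nat.le_of_mul_le_mul_right key hpos

lemma nat_key (b N k m : ℕ) (hk : 1 ≤ k) (hbN : b ≤ N) :
    b.choose (k-1) * ((N-(k-1)).choose m) * (b.choose (k+1) * ((N-(k+1)).choose m)) ≤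
      (b.choose k * ((N-k).choose m))^2 := by
  rcases Nat.lt_or_ge b (k+1) with h | h
  · rw [Nat.choose_eq_zero_of_lt h]; simp
  · have hn : 1 ≤ N - k := by omega
    have e1 : N - (k-1) = (N-k) + 1 := by omega
    have e2 : N - (k+1) = (N-k) - 1 := by omega
    rw [e1, e2]
    obtain ⟨j, rfl⟩ : ∃ j, k = j + 1 := ⟨k-1, by omega⟩
    simp only [Nat.add_sub_cancel]
    calc b.choose j * ((N-(j+1)+1).choose m) * (b.choose (j+1+1) * ((N-(j+1)-1).choose m))
        = (b.choose j * b.choose (j+2)) * ((N-(j+1)-1).choose m * ((N-(j+1)+1).choose m)) := by ring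
      _ ≤ (b.choose (j+1))^2 * (((N-(j+1))).choose m)^2 :=
          Nat.mul_le_mul (lemA b j) (lemB (N-(j+1)) m hn)
      _ = (b.choose (j+1) * ((N-(j+1)).choose m))^2 := by ring

theorem inward_log_concave (a b : ℕ) :
    ∀ (v : Fin 3) (d : Fin 3 →₀ ℕ), 1 ≤ d v →
      MvPolynomial.coeff d
          ((X 0 * X 2 + 1) ^ a * (X 0 * X 2 + X 1 + 1) ^ b : MvPolynomial (Fin 3) ℤ) ^ 2 ≥
        MvPolynomial.coeff (d.update v (d v - 1))
            ((X 0 * X 2 + 1) ^ a * (X 0 * X 2 + X 1 + 1) ^ b : MvPolynomial (Fin 3) ℤ) *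
        MvPolynomial.coeff (d.update v (d v + 1))
            ((X 0 * X 2 + 1) ^ a * (X 0 * X 2 + X 1 + 1) ^ b : MvPolynomial (Fin 3) ℤ) := by
  intro v d hv
  rw [ge_iff_le]
  fin_cases v <;>
    simp only [Fin.isValue, Fin.zero_eta, Fin.mk_one] at hv ⊢ <;>
    simp only [coeff_P, Finsupp.coe_update, Function.update] <;>
    norm_num [Fin.ext_iff]
  · -- v = 0
    split_ifs <;> first | omega | positivity 
  · -- v = 1
    split_ifs <;>
      first
        | exact_mod_cast nat_key b (a+b) (d 1) (d 0) hv (by omega)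
        | omega | positivity
  · -- v = 2
    split_ifs <;> first | omega | positivity
end
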